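/- As P → ∞, P^M · Pout(P) converges to εs^M; that is, in the high SNR regime with equal powers P0 = Ps = P, the HSIC-PA outage probability satisfies Pout(P) ~ εs^M/P^M. -/

import Mathlib

open MeasureTheory ProbabilityTheory Real Filter

/-- The interference threshold `τ(g) = max{0, g/α₀ − 1}`. -/
noncomputable def tau (α0 g : ℝ) : ℝ := max 0 (g / α0 - 1)

/-- The HSIC-PA achievable rate of a secondary user with channel gain `h`,
given the primary channel gain `g`. -/
noncomputable def rateHSIC (P0 Ps α0 h g : ℝ) : ℝ :=
  if Ps * h ≤ tau α0 g then Real.logb 2 (1 + Ps * h)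
  else max (Real.logb 2 (1 + Ps * h / (P0 * g + 1))) (Real.logb 2 (1 + tau α0 g))

/-- The HSIC-PA overall outage probability with equal powers `P0 = Ps = P`, realized on
the canonical probability space carrying `M + 1` i.i.d. rate-one exponential random
variables: coordinate `0` is the primary channel gain `G = |g|²` and coordinates
`1, …, M` are the secondary channel gains `H₁, …, H_M`. -/
noncomputable def outageHSIC (M : ℕ) (R0 Rs P : ℝ) : ℝ :=
  haveI : IsProbabilityMeasure (expMeasure 1) := isProbabilityMeasure_expMeasure one_pos
  ((Measure.pi fun _ : Fin (M + 1) => expMeasure 1)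
    {ω | (⨆ m : Fin M, rateHSIC P P ((2 ^ R0 - 1) / P) (ω m.succ) (ω 0)) < Rs}).toReal

/-!
If every `P·Hₘ < εs`, every user's SINR is below `εs`, so the outage
probability is at least `(1 - e^{-εs/P})^M`. Conversely, in outage either `G ≥ ε₀(1+εs)/P`, where
`τ(G) ≥ εs` and so the only way to stay below `εs` is `P·Hₘ < εs`; or `G < ε₀(1+εs)/P`, where
`P·Hₘ < εs(P·G+1) < εs(ε₀(1+εs)+1)`. The second event carries the extra factor
`1 - e^{-ε₀(1+εs)/P} → 0`, and `P(1 - e^{-c/P}) → c` gives the limit `εs^M` for both bounds.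
-/

open Set Topology

-- `hr` covers the empty index type, where `⨆` is `0`.
lemma ciSup_lt_iff_of_finite_of_pos {ι : Type*} [Finite ι] {f : ι → ℝ} {r : ℝ} (hr : 0 < r) :
    (⨆ i, f i) < r ↔ ∀ i, f i < r := by
  rcases isEmpty_or_nonempty ι with hι | hι
  · simp [Real.iSup_of_isEmpty, hr]
  · obtain ⟨i₀, hi₀⟩ := Finite.exists_max f
    exact ⟨fun h i => (le_ciSup (Finite.bddAbove_range f) i).trans_lt h,
      fun h => (ciSup_le hi₀).trans_lt (h i₀)⟩

lemma tendsto_mul_one_sub_exp_neg_div_atTop (a : ℝ) :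
    Tendsto (fun P : ℝ => P * (1 - exp (-(a / P)))) atTop (𝓝 a) := by
  have hderiv : HasDerivAt (fun t : ℝ => 1 - exp (-(a * t))) a 0 := by
    simpa [sub_eq_add_neg] using (hasDerivAt_neg_exp_mul_exp (r := a) (x := 0)).const_add 1
  refine (hderiv.tendsto_slope_zero_right.comp tendsto_inv_atTop_nhdsGT_zero).congr' ?_
  filter_upwards [eventually_ne_atTop 0] with P hP
  simp [div_eq_mul_inv]

lemma measureReal_mono_ae {α : Type*} [MeasurableSpace α] {μ : Measure α} [IsFiniteMeasure μ]
    {s t : Set α} (h : s ≤ᵐ[μ] t) : μ.real s ≤ μ.real t :=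
  ENNReal.toReal_mono (measure_ne_top μ t) (measure_mono_ae h)

lemma ae_forall_nonneg_pi {ι : Type*} [Fintype ι] {μ : ι → Measure ℝ} [∀ i, SigmaFinite (μ i)]
    (hμ : ∀ i, μ i (Iio 0) = 0) : ∀ᵐ ω ∂Measure.pi μ, ∀ i, 0 ≤ ω i :=
  ae_all_iff.2 fun i =>
    Measure.tendsto_eval_ae_ae.eventually (ae_iff.2 (by simp only [not_le]; exact hμ i))

lemma measureReal_pi_zero_mem_and_forall_succ_mem {M : ℕ} (μ : Measure ℝ) [SigmaFinite μ]
    (s t : Set ℝ) :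
    (Measure.pi fun _ : Fin (M + 1) => μ).real {ω | ω 0 ∈ s ∧ ∀ m : Fin M, ω m.succ ∈ t}
      = μ.real s * μ.real t ^ M := by
  have hbox : {ω : Fin (M + 1) → ℝ | ω 0 ∈ s ∧ ∀ m : Fin M, ω m.succ ∈ t}
      = univ.pi (Fin.cons s fun _ => t) := by
    ext ω
    simp [Fin.forall_fin_succ]
  simp [hbox, measureReal_def, Measure.pi_pi, Fin.prod_univ_succ]

lemma expMeasure_Iio {r : ℝ} (hr : 0 < r) (x : ℝ) :
    expMeasure r (Iio x) = ENNReal.ofReal (if 0 ≤ x then 1 - exp (-(r * x)) else 0) := by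
  rw [expMeasure, gammaMeasure, withDensity_apply _ measurableSet_Iio,
    Measure.restrict_congr_set Iio_ae_eq_Iic]
  exact lintegral_exponentialPDF_eq_antiDeriv hr x

instance isProbabilityMeasure_expMeasure_one : IsProbabilityMeasure (expMeasure 1) :=
  isProbabilityMeasure_expMeasure one_pos

lemma measureReal_expMeasure_one_Iio {x : ℝ} (hx : 0 ≤ x) :
    (expMeasure 1).real (Iio x) = 1 - exp (-x) := by
  rw [measureReal_def, expMeasure_Iio one_pos, if_pos hx, one_mul,
    ENNReal.toReal_ofReal (by simpa using hx)]

noncomputable def sinrHSIC (P0 Ps α0 h g : ℝ) : ℝ :=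
  if Ps * h ≤ tau α0 g then Ps * h else max (Ps * h / (P0 * g + 1)) (tau α0 g)

section sinrHSIC

variable {P0 Ps α0 h g : ℝ}

lemma tau_nonneg : 0 ≤ tau α0 g := le_max_left _ _

lemma le_tau {x : ℝ} (hα0 : 0 < α0) (hg : α0 * (1 + x) ≤ g) : x ≤ tau α0 g :=
  le_max_of_le_right (by rw [le_sub_iff_add_le', le_div_iff₀ hα0]; linarith)

lemma sinrHSIC_nonneg (hh : 0 ≤ Ps * h) : 0 ≤ sinrHSIC P0 Ps α0 h g := by
  unfold sinrHSIC
  split_ifs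
  exacts [hh, le_max_of_le_right tau_nonneg]

lemma sinrHSIC_le (hh : 0 ≤ Ps * h) (hg : 0 ≤ P0 * g) : sinrHSIC P0 Ps α0 h g ≤ Ps * h := by
  unfold sinrHSIC
  split_ifs with hτ
  · exact le_rfl
  · exact max_le (div_le_self hh (by linarith)) (not_le.1 hτ).le

lemma div_le_sinrHSIC (hh : 0 ≤ Ps * h) (hg : 0 ≤ P0 * g) :
    Ps * h / (P0 * g + 1) ≤ sinrHSIC P0 Ps α0 h g := by
  unfold sinrHSIC
  split_ifs
  exacts [div_le_self hh (by linarith), le_max_left _ _]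

lemma min_le_sinrHSIC : min (Ps * h) (tau α0 g) ≤ sinrHSIC P0 Ps α0 h g := by
  unfold sinrHSIC
  split_ifs
  exacts [min_le_left _ _, (min_le_right _ _).trans (le_max_right _ _)]

lemma rateHSIC_eq_logb_sinrHSIC (hh : 0 ≤ Ps * h) (hg : 0 ≤ P0 * g) :
    rateHSIC P0 Ps α0 h g = logb 2 (1 + sinrHSIC P0 Ps α0 h g) := by
  have hmono : MonotoneOn (fun x : ℝ => logb 2 (1 + x)) (Ici 0) := fun x hx y _ hxy =>
    logb_le_logb_of_le one_lt_two (by linarith [mem_Ici.1 hx]) (by linarith)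
  unfold rateHSIC sinrHSIC
  split_ifs
  · rfl
  · exact (hmono.map_max (div_nonneg hh (by linarith)) tau_nonneg).symm

lemma rateHSIC_lt_logb_iff {ε : ℝ} (hε : -1 < ε) (hh : 0 ≤ Ps * h) (hg : 0 ≤ P0 * g) :
    rateHSIC P0 Ps α0 h g < logb 2 (1 + ε) ↔ sinrHSIC P0 Ps α0 h g < ε := by
  rw [rateHSIC_eq_logb_sinrHSIC hh hg,
    logb_lt_logb_iff one_lt_two (by linarith [sinrHSIC_nonneg (P0 := P0) (α0 := α0) (g := g) hh])
      (by linarith), add_lt_add_iff_left]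

end sinrHSIC

noncomputable abbrev channelLaw (M : ℕ) : Measure (Fin (M + 1) → ℝ) :=
  Measure.pi fun _ => expMeasure 1

lemma ae_channelLaw_nonneg (M : ℕ) : ∀ᵐ ω ∂channelLaw M, ∀ i, 0 ≤ ω i :=
  ae_forall_nonneg_pi fun _ => by simp [expMeasure_Iio one_pos]

section outage

variable {M : ℕ} {ε0 εs P : ℝ}

lemma outageHSIC_eq_measureReal_sinrHSIC {R0 Rs : ℝ} (hRs : 0 < Rs) (hP : 0 < P) :
    outageHSIC M R0 Rs P = (channelLaw M).real
      {ω | ∀ m : Fin M, sinrHSIC P P ((2 ^ R0 - 1) / P) (ω m.succ) (ω 0) < 2 ^ Rs - 1} := by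
  have hRs_eq : Rs = logb 2 (1 + (2 ^ Rs - 1)) := by simp
  refine measureReal_congr (eventuallyEq_set.2 ?_)
  filter_upwards [ae_channelLaw_nonneg M] with ω hω
  rw [ciSup_lt_iff_of_finite_of_pos hRs]
  refine forall_congr' fun m => ?_
  conv_lhs => rw [hRs_eq]
  exact rateHSIC_lt_logb_iff (by linarith [rpow_pos_of_pos two_pos Rs])
    (mul_nonneg hP.le (hω _)) (mul_nonneg hP.le (hω 0))

lemma le_measureReal_sinrHSIC_outage (hεs : 0 ≤ εs) (hP : 0 < P) :
    (1 - exp (-(εs / P))) ^ M ≤ (channelLaw M).real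
      {ω | ∀ m : Fin M, sinrHSIC P P (ε0 / P) (ω m.succ) (ω 0) < εs} := by
  calc (1 - exp (-(εs / P))) ^ M
      = (channelLaw M).real {ω | ω 0 ∈ univ ∧ ∀ m : Fin M, ω m.succ ∈ Iio (εs / P)} := by
        rw [measureReal_pi_zero_mem_and_forall_succ_mem, probReal_univ, one_mul,
          measureReal_expMeasure_one_Iio (by positivity)]
    _ ≤ _ := by
      refine measureReal_mono_ae ?_
      filter_upwards [ae_channelLaw_nonneg M] with ω hω hsmall m
      have hPh : P * ω m.succ < εs := by rw [← lt_div_iff₀' hP]; exact hsmall.2 m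
      exact (sinrHSIC_le (mul_nonneg hP.le (hω _)) (mul_nonneg hP.le (hω 0))).trans_lt hPh

lemma measureReal_sinrHSIC_outage_le (hε0 : 0 < ε0) (hεs : 0 ≤ εs) (hP : 0 < P) :
    (channelLaw M).real {ω | ∀ m : Fin M, sinrHSIC P P (ε0 / P) (ω m.succ) (ω 0) < εs}
      ≤ (1 - exp (-(εs / P))) ^ M + (1 - exp (-(ε0 * (1 + εs) / P)))
          * (1 - exp (-(εs * (ε0 * (1 + εs) + 1) / P))) ^ M := by
  set d := ε0 * (1 + εs)
  calc _ ≤ (channelLaw M).real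
        ({ω | ω 0 ∈ univ ∧ ∀ m : Fin M, ω m.succ ∈ Iio (εs / P)} ∪
          {ω | ω 0 ∈ Iio (d / P) ∧ ∀ m : Fin M, ω m.succ ∈ Iio (εs * (d + 1) / P)}) := by
        refine measureReal_mono_ae ?_
        filter_upwards [ae_channelLaw_nonneg M] with ω hω houtage
        by_cases hG : d / P ≤ ω 0
        · have hτ : εs ≤ tau (ε0 / P) (ω 0) := le_tau (by positivity) (by rwa [div_mul_eq_mul_div])
          refine Or.inl ⟨mem_univ _, fun m => ?_⟩
          have hPh := (min_lt_iff.1 (min_le_sinrHSIC.trans_lt (houtage m))).resolve_right hτ.not_gt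
          rwa [mem_Iio, lt_div_iff₀' hP]
        · refine Or.inr ⟨not_le.1 hG, fun m => ?_⟩
          have hPG : P * ω 0 < d := by rw [← lt_div_iff₀' hP]; exact not_le.1 hG
          have hPh := (div_le_sinrHSIC (mul_nonneg hP.le (hω _))
            (mul_nonneg hP.le (hω 0))).trans_lt (houtage m)
          rw [div_lt_iff₀ (by nlinarith [hω 0])] at hPh
          rw [mem_Iio, lt_div_iff₀' hP]
          nlinarith
    _ ≤ _ := measureReal_union_le _ _
    _ = _ := by
        simp only [measureReal_pi_zero_mem_and_forall_succ_mem, probReal_univ, one_mul]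
        rw [measureReal_expMeasure_one_Iio (by positivity),
          measureReal_expMeasure_one_Iio (by positivity),
          measureReal_expMeasure_one_Iio (by positivity)]

end outage

theorem hsic_pa_outage_high_snr_limit_general
    (M : ℕ) (R0 Rs : ℝ) (hR0 : 0 < R0) (hRs : 0 < Rs)
    (εs : ℝ) (hεs : εs = 2 ^ Rs - 1) :
    Tendsto (fun P : ℝ => P ^ M * outageHSIC M R0 Rs P) atTop (nhds (εs ^ M)) := by
  set ε0 : ℝ := 2 ^ R0 - 1
  have hε0 : 0 < ε0 := sub_pos.2 (one_lt_rpow one_lt_two hR0)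
  have hεs_nonneg : 0 ≤ εs := hεs ▸ sub_nonneg.2 (one_le_rpow one_le_two hRs.le)
  set d := ε0 * (1 + εs)
  have hlower := (tendsto_mul_one_sub_exp_neg_div_atTop εs).pow M
  have hd : Tendsto (fun P : ℝ => 1 - exp (-(d / P))) atTop (𝓝 0) := by
    have hcont : Continuous fun x : ℝ => 1 - exp (-x) := by fun_prop
    simpa [Function.comp_def] using
      (hcont.tendsto 0).comp ((tendsto_const_nhds (x := d)).div_atTop tendsto_id)
  have hupper := hlower.add (hd.mul ((tendsto_mul_one_sub_exp_neg_div_atTop (εs * (d + 1))).pow M))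
  rw [zero_mul, add_zero] at hupper
  refine tendsto_of_tendsto_of_tendsto_of_le_of_le' hlower hupper ?_ ?_ <;>
    filter_upwards [eventually_gt_atTop 0] with P hP <;>
    rw [outageHSIC_eq_measureReal_sinrHSIC hRs hP, ← hεs]
  · rw [mul_pow]
    gcongr
    exact le_measureReal_sinrHSIC_outage hεs_nonneg hP
  · calc _ ≤ P ^ M * ((1 - exp (-(εs / P))) ^ M + (1 - exp (-(d / P)))
          * (1 - exp (-(εs * (d + 1) / P))) ^ M) := by
          gcongr
          exact measureReal_sinrHSIC_outage_le hε0 hεs_nonneg hP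
      _ = _ := by simp only [mul_pow]; ring

/-- Corollary 2: in the high SNR regime with equal powers `P0 = Ps = P`,
`P^M · Pout(P) → εs^M`, i.e. `Pout(P) ~ εs^M / P^M`. -/
theorem hsic_pa_outage_high_snr_limit
    (M : ℕ) (hM : 1 ≤ M) (R0 Rs : ℝ) (hR0 : 0 < R0) (hRs : 0 < Rs)
    (εs : ℝ) (hεs : εs = 2 ^ Rs - 1) :
    Tendsto (fun P : ℝ => P ^ M * outageHSIC M R0 Rs P) atTop (nhds (εs ^ M)) :=
  hsic_pa_outage_high_snr_limit_general M R0 Rs hR0 hRs εs hεs
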